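/- Let k be a field, (A,·) an associative k-algebra, (R,∘,ℓ,r) an A-bimodule k-algebra, α : R → A a linear map, and λ ∈ k. Define u *_α v := ℓ(α(u))v + u r(α(v)) + λ u∘v for u, v ∈ R. Then *_α is associative if and only if ℓ(α(u)·α(v) − α(u *_α v))w = u r(α(v)·α(w) − α(v *_α w)) for all u, v, w ∈ R. -/

import Mathlib

section BimoduleAlgebra

variable {k A R : Type*} [CommSemiring k]
  [NonUnitalRing A] [Module k A]
  [NonUnitalRing R] [Module k R] [SMulCommClass k R R] [IsScalarTower k R R]
  (ℓ r : A →ₗ[k] R →ₗ[k] R) (α : R →ₗ[k] A) (lam : k)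

def starProduct (u v : R) : R :=
  ℓ (α u) v + r (α v) u + lam • (u * v)

/-- All terms of the associator of `*_α` cancel by the bimodule-algebra axioms, except those
in which `α` is applied to a product. -/
theorem starProduct_associator
    (hbim1 : ∀ (x y : A) (v : R), ℓ (x * y) v = ℓ x (ℓ y v))
    (hbim2 : ∀ (x y : A) (v : R), r y (r x v) = r (x * y) v)
    (hbim3 : ∀ (x y : A) (v : R), r y (ℓ x v) = ℓ x (r y v))
    (halg1 : ∀ (x : A) (v w : R), ℓ x (v * w) = (ℓ x v) * w)
    (halg2 : ∀ (x : A) (v w : R), r x (v * w) = v * (r x w))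
    (halg3 : ∀ (x : A) (v w : R), (r x v) * w = v * (ℓ x w))
    (u v w : R) :
    starProduct ℓ r α lam (starProduct ℓ r α lam u v) w
        - starProduct ℓ r α lam u (starProduct ℓ r α lam v w) =
      r (α v * α w - α (starProduct ℓ r α lam v w)) u
        - ℓ (α u * α v - α (starProduct ℓ r α lam u v)) w := by
  simp only [starProduct, map_add, map_sub, map_smul, LinearMap.add_apply,
    LinearMap.sub_apply, LinearMap.smul_apply, smul_add, add_mul, mul_add,
    smul_mul_assoc, mul_smul_comm, smul_smul, ← hbim1, hbim2, hbim3,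
    halg1, halg2, halg3, mul_assoc]
  abel

theorem starProduct_assoc_iff
    (hbim1 : ∀ (x y : A) (v : R), ℓ (x * y) v = ℓ x (ℓ y v))
    (hbim2 : ∀ (x y : A) (v : R), r y (r x v) = r (x * y) v)
    (hbim3 : ∀ (x y : A) (v : R), r y (ℓ x v) = ℓ x (r y v))
    (halg1 : ∀ (x : A) (v w : R), ℓ x (v * w) = (ℓ x v) * w)
    (halg2 : ∀ (x : A) (v w : R), r x (v * w) = v * (r x w))
    (halg3 : ∀ (x : A) (v w : R), (r x v) * w = v * (ℓ x w))
    (u v w : R) :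
    starProduct ℓ r α lam (starProduct ℓ r α lam u v) w
        = starProduct ℓ r α lam u (starProduct ℓ r α lam v w) ↔
      ℓ (α u * α v - α (starProduct ℓ r α lam u v)) w
        = r (α v * α w - α (starProduct ℓ r α lam v w)) u := by
  rw [← sub_eq_zero, starProduct_associator ℓ r α lam hbim1 hbim2 hbim3 halg1 halg2 halg3,
    sub_eq_zero, eq_comm]

end BimoduleAlgebra

theorem stmt3 {k A R : Type} [Field k]
    [NonUnitalRing A] [Module k A]
    [NonUnitalRing R] [Module k R] [SMulCommClass k R R] [IsScalarTower k R R]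
    (ℓ r : A →ₗ[k] R →ₗ[k] R)
    (hbim1 : ∀ (x y : A) (v : R), ℓ (x * y) v = ℓ x (ℓ y v))
    (hbim2 : ∀ (x y : A) (v : R), r y (r x v) = r (x * y) v)
    (hbim3 : ∀ (x y : A) (v : R), r y (ℓ x v) = ℓ x (r y v))
    (halg1 : ∀ (x : A) (v w : R), ℓ x (v * w) = (ℓ x v) * w)
    (halg2 : ∀ (x : A) (v w : R), r x (v * w) = v * (r x w))
    (halg3 : ∀ (x : A) (v w : R), (r x v) * w = v * (ℓ x w))
    (α : R →ₗ[k] A) (lam : k) :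
    let star : R → R → R := fun u v => ℓ (α u) v + r (α v) u + lam • (u * v)
    (∀ u v w : R, star (star u v) w = star u (star v w)) ↔
      (∀ u v w : R,
        ℓ (α u * α v - α (star u v)) w = r (α v * α w - α (star v w)) u) :=
  forall₃_congr (starProduct_assoc_iff ℓ r α lam hbim1 hbim2 hbim3 halg1 halg2 halg3)
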